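/- arXiv:2111.13286 — 4 statements merged into one kernel-verified Lean document; each statement's English description precedes it below -/
import Mathlib

section
/- If a sequence of segments Δ₁, ..., Δ_k is in ascending order and Δ_i, Δ_j (i < j) are linked, then the sequence obtained by replacing Δ_i, Δ_j with Δ_i ∩ Δ_j, Δ_i ∪ Δ_j in the appropriate positions can be arranged so that the resulting sequence is again in ascending order. Concretely: if Δ, Δ' are linked with Δ < Δ' and Δ₁,...,Δ_r, Δ, Δ', Δ₁',...,Δ_s' is ascending, then Δ₁,...,Δ_r, Δ∩Δ', Δ∪Δ', Δ₁',...,Δ_s' is also ascending (dropping Δ∩Δ' if empty). -/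
set_option linter.unusedVariables false

/-- A segment `[a, b]` of integers, with `a ≤ b`. -/
@[ext] structure Seg where
  a : ℤ
  b : ℤ
  hle : a ≤ b

namespace Seg

instance : DecidableEq Seg := fun Δ Δ' =>
  if h : Δ.a = Δ'.a ∧ Δ.b = Δ'.b then .isTrue (Seg.ext h.1 h.2)
  else .isFalse fun he => h ⟨congrArg Seg.a he, congrArg Seg.b he⟩

instance : LinearOrder Seg :=
  LinearOrder.lift' (fun Δ => toLex (Δ.a, Δ.b)) fun Δ Δ' h => by
    have h2 : (Δ.a, Δ.b) = (Δ'.a, Δ'.b) := toLex.injective h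
    exact Seg.ext (congrArg Prod.fst h2) (congrArg Prod.snd h2)

/-- `Δ.Sub Δ'` means `Δ ⊆ Δ'` as sets of integers. -/
def Sub (Δ Δ' : Seg) : Prop := Δ'.a ≤ Δ.a ∧ Δ.b ≤ Δ'.b

/-- Two segments are linked if their union is a segment (they overlap or are adjacent)
and neither contains the other. -/
def Linked (Δ Δ' : Seg) : Prop :=
  Δ.a ≤ Δ'.b + 1 ∧ Δ'.a ≤ Δ.b + 1 ∧ ¬ Δ.Sub Δ' ∧ ¬ Δ'.Sub Δ

/-- `Δ < Δ'` : linked with smaller right endpoint. -/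
def lt' (Δ Δ' : Seg) : Prop := Linked Δ Δ' ∧ Δ.b < Δ'.b

/-- relative length of a segment -/
def len (Δ : Seg) : ℤ := Δ.b - Δ.a + 1

end Seg

/-- The possibly-empty segment `[x,y]`, as a multiset (empty if `x > y`). -/
def seg? (x y : ℤ) : Multiset Seg := if h : x ≤ y then {⟨x, y, h⟩} else 0

/-- Union of two segments, as the segment `[min, max]`. -/
def unionSeg (Δ Δ' : Seg) : Seg :=
  ⟨min Δ.a Δ'.a, max Δ.b Δ'.b, (min_le_left _ _).trans (Δ.hle.trans (le_max_left _ _))⟩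

/-- Intersection of two segments, as a (possibly empty) multiset. -/
def interMS (Δ Δ' : Seg) : Multiset Seg := seg? (max Δ.a Δ'.a) (min Δ.b Δ'.b)

/-- `⁻Δ = [a+1,b]`, as a possibly empty multiset. -/
def lminus (Δ : Seg) : Multiset Seg := seg? (Δ.a + 1) Δ.b

/-- sub-multiset of segments of `m` with left endpoint `c` (i.e. `m[c]`) -/
def atLeft (m : Multiset Seg) (c : ℤ) : Multiset Seg := m.filter fun S => S.a = c

/-- sub-multiset of segments of `m` with right endpoint `c` (i.e. `m⟨c⟩`) -/
def atRight (m : Multiset Seg) (c : ℤ) : Multiset Seg := m.filter fun S => S.b = c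

/-- `ε_{[x,y]}(m)` : number of segments of `m` with left endpoint `x` and right endpoint `≥ y`. -/
def eps (x y : ℤ) (m : Multiset Seg) : ℕ := (m.filter fun S => S.a = x ∧ y ≤ S.b).card

/-- A segment `Δ = [a,b]` is admissible to `h` if `h` contains some `[a,c]` with `c ≥ b`. -/
def SegAdm (Δ : Seg) (h : Multiset Seg) : Prop := ∃ Δ' ∈ h, Δ'.a = Δ.a ∧ Δ.b ≤ Δ'.b

noncomputable instance (Δ : Seg) (h : Multiset Seg) : Decidable (SegAdm Δ h) := Classical.dec _

/-- candidates for the first segment of the removal sequence -/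
def firstCand (Δ : Seg) (h : Multiset Seg) : Finset Seg :=
  h.toFinset.filter fun Δ' => Δ'.a = Δ.a ∧ Δ.b ≤ Δ'.b

/-- candidates for the next segment of the removal sequence -/
def nextCand (Δ prev : Seg) (h : Multiset Seg) : Finset Seg :=
  h.toFinset.filter fun Δ'' => prev.a < Δ''.a ∧ Δ''.b < prev.b ∧ Δ.b ≤ Δ''.b

/-- tail of the removal sequence: recursively pick the lexicographically minimal
strictly nested segment -/
def removalTail (Δ : Seg) (h : Multiset Seg) (prev : Seg) : List Seg :=
  if hc : (nextCand Δ prev h).Nonempty then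
    (nextCand Δ prev h).min' hc :: removalTail Δ h ((nextCand Δ prev h).min' hc)
  else []
termination_by (prev.b - prev.a).toNat
decreasing_by
  have hmem := Finset.min'_mem (nextCand Δ prev h) hc
  have h4 := ((nextCand Δ prev h).min' hc).hle
  simp only [nextCand, Finset.mem_filter] at hmem h4
  obtain ⟨-, h1, h2, h3⟩ := hmem
  simp only [nextCand]
  omega

/-- The removal sequence for `(Δ, h)`. -/
def removalSeq (Δ : Seg) (h : Multiset Seg) : List Seg :=
  if hc : (firstCand Δ h).Nonempty then
    (firstCand Δ h).min' hc :: removalTail Δ h ((firstCand Δ h).min' hc)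
  else []

/-- `Υ(Δ, h)` : first segment of the removal sequence (junk value `Δ` if undefined). -/
noncomputable def Upsilon (Δ : Seg) (h : Multiset Seg) : Seg :=
  if hc : (firstCand Δ h).Nonempty then (firstCand Δ h).min' hc else Δ

/-- truncations of the removal sequence: `Δ_i^{tr} = [a_{i+1}, b_i]`, `Δ_r^{tr} = [b(Δ)+1, b_r]` -/
def truncs (Δ : Seg) : List Seg → Multiset Seg
  | [] => 0
  | [Δr] => seg? (Δ.b + 1) Δr.b
  | Δi :: Δj :: rest => seg? Δj.a Δi.b + truncs Δ (Δj :: rest)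

/-- The removal process `𝔯(Δ, h)`. -/
def removal (Δ : Seg) (h : Multiset Seg) : Multiset Seg :=
  (h - (removalSeq Δ h : Multiset Seg)) + truncs Δ (removalSeq Δ h)

/-- `𝔯(𝔫, h)` for a multisegment `𝔫`, performed along an ascending
(lexicographically sorted) enumeration of `𝔫`; `none` plays the role of `∞`. -/
noncomputable def removalM (n h : Multiset Seg) : Option (Multiset Seg) :=
  (n.sort (· ≤ ·)).foldl
    (fun acc Δ => acc.bind fun h' => if SegAdm Δ h' then some (removal Δ h') else none)
    (some h)

/-- sequential admissibility of a list of segments to a multisegment -/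
def listAdm : List Seg → Multiset Seg → Prop
  | [], _ => True
  | Δ :: rest, h => SegAdm Δ h ∧ listAdm rest (removal Δ h)

/-- multiset of first removal segments along a list (`none` = `∞`) -/
noncomputable def sList : List Seg → Multiset Seg → Option (Multiset Seg)
  | [], _ => some 0
  | Δ :: rest, h =>
    if SegAdm Δ h then (sList rest (removal Δ h)).map fun s => Upsilon Δ h ::ₘ s
    else none

/-- `𝔰(m, h)` : multiset of first removal segments. -/
noncomputable def sMulti (m h : Multiset Seg) : Option (Multiset Seg) :=
  sList (m.sort (· ≤ ·)) h

/-- the order `≤^a_c` on multisegments at a left point (compare sorted-decreasing lists) -/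
def leAc (m₁ m₂ : Multiset Seg) : Prop :=
  ∃ l₁ l₂ : List Seg, (l₁ : Multiset Seg) = m₁ ∧ (l₂ : Multiset Seg) = m₂ ∧
    l₁.Pairwise (fun S T => T.b ≤ S.b) ∧ l₂.Pairwise (fun S T => T.b ≤ S.b) ∧
    l₁.length ≤ l₂.length ∧
    ∀ i (h1 : i < l₁.length) (h2 : i < l₂.length), (l₁.get ⟨i, h1⟩).b ≤ (l₂.get ⟨i, h2⟩).b

/-- extension of `≤^a_c` with `∞ = none` on top -/
def leAcO : Option (Multiset Seg) → Option (Multiset Seg) → Prop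
  | _, none => True
  | some m₁, some m₂ => leAc m₁ m₂
  | none, some _ => False

/-- elementary intersection-union operation: `m₂` is obtained from `m₁` by replacing two
linked segments by their union and (if nonempty) intersection -/
def elemIU (m₁ m₂ : Multiset Seg) : Prop :=
  ∃ Δ ∈ m₁, ∃ Δ' ∈ m₁.erase Δ, Seg.Linked Δ Δ' ∧
    m₂ = (((m₁.erase Δ).erase Δ') + {unionSeg Δ Δ'}) + interMS Δ Δ'

/-- `leZ m₂ m₁` : `m₂ ≤_Z m₁`, i.e. `m₂` is obtained from `m₁` by a finite sequence of
elementary intersection-union operations -/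
def leZ (m₂ m₁ : Multiset Seg) : Prop := Relation.ReflTransGen elemIU m₁ m₂

/-- a list of segments is in an ascending order -/
def ascList (l : List Seg) : Prop := l.Pairwise fun Δ Δ' => ¬ Seg.lt' Δ' Δ

/-- the intersection of two segments, as a list of length ≤ 1 -/
def interList (Δ Δ' : Seg) : List Seg :=
  if h : max Δ.a Δ'.a ≤ min Δ.b Δ'.b then [⟨max Δ.a Δ'.a, min Δ.b Δ'.b, h⟩] else []

/-- the list `[Δ ∩ Δ', Δ ∪ Δ']` (intersection dropped if empty) -/
def iuList (Δ Δ' : Seg) : List Seg := interList Δ Δ' ++ [unionSeg Δ Δ']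


section Aux

lemma key_lt'_iff (X Y : Seg) : Seg.lt' X Y ↔
    ((X.a ≤ Y.b + 1 ∧ Y.a ≤ X.b + 1 ∧ ¬ (Y.a ≤ X.a ∧ X.b ≤ Y.b) ∧ ¬ (X.a ≤ Y.a ∧ Y.b ≤ X.b)) ∧ X.b < Y.b) := by
  rfl

lemma keyU_left (Δ Δ' S : Seg) (h : Seg.lt' Δ Δ') (h1 : ¬ Seg.lt' Δ S) (h2 : ¬ Seg.lt' Δ' S) :
    ¬ Seg.lt' (unionSeg Δ Δ') S := by
  simp only [key_lt'_iff, unionSeg] at *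
  have := Δ.hle; have := Δ'.hle; have := S.hle
  omega

lemma keyI_left (Δ Δ' S I : Seg) (hIa : I.a = max Δ.a Δ'.a) (hIb : I.b = min Δ.b Δ'.b)
    (h : Seg.lt' Δ Δ') (h1 : ¬ Seg.lt' Δ S) (h2 : ¬ Seg.lt' Δ' S) :
    ¬ Seg.lt' I S := by
  simp only [key_lt'_iff] at *
  have := Δ.hle; have := Δ'.hle; have := S.hle
  omega

lemma keyU_right (Δ Δ' T : Seg) (h : Seg.lt' Δ Δ') (h1 : ¬ Seg.lt' T Δ) (h2 : ¬ Seg.lt' T Δ') :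
    ¬ Seg.lt' T (unionSeg Δ Δ') := by
  simp only [key_lt'_iff, unionSeg] at *
  have := Δ.hle; have := Δ'.hle; have := T.hle
  omega

lemma keyI_right (Δ Δ' T I : Seg) (hIa : I.a = max Δ.a Δ'.a) (hIb : I.b = min Δ.b Δ'.b)
    (h : Seg.lt' Δ Δ') (h1 : ¬ Seg.lt' T Δ) (h2 : ¬ Seg.lt' T Δ') :
    ¬ Seg.lt' T I := by
  simp only [key_lt'_iff] at *
  have := Δ.hle; have := Δ'.hle; have := T.hle
  omega

lemma keyUI (Δ Δ' I : Seg) (hIb : I.b = min Δ.b Δ'.b) (h : Seg.lt' Δ Δ') :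
    ¬ Seg.lt' (unionSeg Δ Δ') I := by
  simp only [key_lt'_iff, unionSeg] at *
  have := Δ.hle; have := Δ'.hle
  omega

lemma mem_iuList (Δ Δ' X : Seg) (hX : X ∈ iuList Δ Δ') :
    X = unionSeg Δ Δ' ∨ (X.a = max Δ.a Δ'.a ∧ X.b = min Δ.b Δ'.b) := by
  simp only [iuList, interList, List.mem_append, List.mem_singleton] at hX
  split at hX
  · rcases hX with hX | hX
    · simp only [List.mem_singleton] at hX; subst hX; right; exact ⟨rfl, rfl⟩
    · left; exact hX
  · simp only [List.not_mem_nil, false_or] at hX; left; exact hX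

end Aux

/-- If `Δ < Δ'` are linked and `l₁ ++ [Δ, Δ'] ++ l₂` is an ascending sequence,
then `l₁ ++ [Δ ∩ Δ', Δ ∪ Δ'] ++ l₂` (intersection dropped if empty) is again ascending. -/
theorem ascending_preserved_by_intersection_union (Δ Δ' : Seg) (l₁ l₂ : List Seg)
    (h : Seg.lt' Δ Δ') (hasc : ascList (l₁ ++ Δ :: Δ' :: l₂)) :
    ascList (l₁ ++ iuList Δ Δ' ++ l₂) := by
  unfold ascList at *
  rw [List.pairwise_append] at hasc
  obtain ⟨hp1, hp2, hcross⟩ := hasc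
  rw [List.pairwise_cons] at hp2
  obtain ⟨hΔ, hp2⟩ := hp2
  rw [List.pairwise_cons] at hp2
  obtain ⟨hΔ', hp2⟩ := hp2
  rw [List.append_assoc, List.pairwise_append]
  refine ⟨hp1, ?_, ?_⟩
  · rw [List.pairwise_append]
    refine ⟨?_, hp2, ?_⟩
    · have hI : ∀ I ∈ interList Δ Δ', I.a = max Δ.a Δ'.a ∧ I.b = min Δ.b Δ'.b := by
        intro I hIm
        simp only [interList] at hIm
        split at hIm
        · simp only [List.mem_singleton] at hIm; subst hIm; exact ⟨rfl, rfl⟩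
        · simp at hIm
      unfold iuList
      rw [List.pairwise_append]
      refine ⟨?_, List.pairwise_singleton _ _, ?_⟩
      · rcases hIc : interList Δ Δ' with _ | ⟨I, rest⟩
        · exact List.Pairwise.nil
        · have : rest = [] := by
            simp only [interList] at hIc; split at hIc <;> simp_all
          subst this
          exact List.pairwise_singleton _ _
      · intro I hIm U hU
        simp only [List.mem_singleton] at hU; subst hU
        obtain ⟨hIa, hIb⟩ := hI I hIm
        exact keyUI Δ Δ' I hIb h
    · intro X hX T hT
      rcases mem_iuList Δ Δ' X hX with rfl | ⟨hXa, hXb⟩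
      · exact keyU_right Δ Δ' T h (hΔ T (by simp [hT])) (hΔ' T hT)
      · exact keyI_right Δ Δ' T X hXa hXb h (hΔ T (by simp [hT])) (hΔ' T hT)
  · intro S hS X hX
    have h1 : ¬ Seg.lt' Δ S := hcross S hS Δ (by simp)
    have h2 : ¬ Seg.lt' Δ' S := hcross S hS Δ' (by simp)
    rw [List.mem_append] at hX
    rcases hX with hX | hX
    · rcases mem_iuList Δ Δ' X hX with rfl | ⟨hXa, hXb⟩
      · exact keyU_left Δ Δ' S h h1 h2
      · exact keyI_left Δ Δ' S X hXa hXb h h1 h2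
    · exact hcross S hS X (by simp [hX])
end

section
/- (First-segment exchange.) Let 𝔥 be a multisegment and let Δ, Δ' be two segments with the same left endpoint, both appropriately admissible. Then the multiset {Υ(Δ, 𝔥), Υ(Δ', 𝔯(Δ, 𝔥))} equals the multiset {Υ(Δ', 𝔥), Υ(Δ, 𝔯(Δ', 𝔥))}. -/
set_option linter.unusedVariables false

section Aux

lemma seg_le_iff (S T : Seg) : S ≤ T ↔ S.a < T.a ∨ (S.a = T.a ∧ S.b ≤ T.b) := by
  show toLex (S.a, S.b) ≤ toLex (T.a, T.b) ↔ _
  rw [Prod.Lex.le_iff]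
  exact Iff.rfl

lemma adm_iff (Δ : Seg) (h : Multiset Seg) : SegAdm Δ h ↔ (firstCand Δ h).Nonempty := by
  simp [SegAdm, firstCand, Finset.Nonempty]

lemma upsilon_eq (Δ : Seg) (h : Multiset Seg) (hc : (firstCand Δ h).Nonempty) :
    Upsilon Δ h = (firstCand Δ h).min' hc := by
  rw [Upsilon, dif_pos hc]

lemma upsilon_mem (Δ : Seg) (h : Multiset Seg) (hc : (firstCand Δ h).Nonempty) :
    Upsilon Δ h ∈ firstCand Δ h := by
  rw [upsilon_eq Δ h hc]; exact Finset.min'_mem _ _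

lemma mem_firstCand {Δ T : Seg} {h : Multiset Seg} :
    T ∈ firstCand Δ h ↔ T ∈ h ∧ T.a = Δ.a ∧ Δ.b ≤ T.b := by
  simp [firstCand]

lemma upsilon_le (Δ : Seg) (h : Multiset Seg) (hc : (firstCand Δ h).Nonempty)
    {T : Seg} (hT : T ∈ firstCand Δ h) : Upsilon Δ h ≤ T := by
  rw [upsilon_eq Δ h hc]; exact Finset.min'_le _ _ hT

lemma upsilon_congr {Δ : Seg} {h₁ h₂ : Multiset Seg}
    (he : firstCand Δ h₁ = firstCand Δ h₂) : Upsilon Δ h₁ = Upsilon Δ h₂ := by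
  unfold Upsilon
  simp only [he]

lemma mem_seg? {x : Seg} {u v : ℤ} (hx : x ∈ seg? u v) : x.a = u ∧ x.b = v := by
  unfold seg? at hx
  split at hx
  · simp only [Multiset.mem_singleton] at hx; subst hx; exact ⟨rfl, rfl⟩
  · simp at hx

lemma mem_nextCand {Δ prev T : Seg} {h : Multiset Seg} :
    T ∈ nextCand Δ prev h ↔ T ∈ h ∧ prev.a < T.a ∧ T.b < prev.b ∧ Δ.b ≤ T.b := by
  simp [nextCand]

lemma removalTail_gt (Δ : Seg) (h : Multiset Seg) (prev : Seg) :
    ∀ s ∈ removalTail Δ h prev, prev.a < s.a := by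
  generalize hn : (prev.b - prev.a).toNat = n
  induction n using Nat.strong_induction_on generalizing prev with
  | _ n ih =>
    rw [removalTail]
    split
    · rename_i hc
      intro s hs
      set m := (nextCand Δ prev h).min' hc with hm
      have hmem : m ∈ nextCand Δ prev h := Finset.min'_mem _ _
      rw [mem_nextCand] at hmem
      obtain ⟨-, hma, hmb, -⟩ := hmem
      rcases List.mem_cons.mp hs with rfl | hs
      · exact hma
      · have hlt : (m.b - m.a).toNat < n := by
          have := m.hle; have := prev.hle; omega
        exact hma.trans (ih _ hlt m rfl s hs)
    · intro s hs; simp at hs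

lemma truncs_gt (Δ : Seg) : ∀ l : List Seg, (∀ s ∈ l.tail, Δ.a < s.a) →
    ∀ x ∈ truncs Δ l, Δ.a < x.a := by
  intro l
  induction l with
  | nil => simp [truncs]
  | cons Δi rest ih =>
    cases rest with
    | nil =>
      intro _ x hx
      simp only [truncs] at hx
      have := (mem_seg? hx).1
      have := Δ.hle
      omega
    | cons Δj rest2 =>
      intro htail x hx
      simp only [truncs, Multiset.mem_add] at hx
      rcases hx with hx | hx
      · have := (mem_seg? hx).1
        have : Δ.a < Δj.a := htail Δj (by simp)
        omega
      · exact ih (fun s hs => htail s (List.mem_cons_of_mem _ hs)) x hx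

lemma bridge (Δ Δ' : Seg) (h : Multiset Seg) (hA : Δ'.a = Δ.a) (h1 : SegAdm Δ h) :
    firstCand Δ' (removal Δ h) = firstCand Δ' (h.erase (Upsilon Δ h)) := by
  have hc : (firstCand Δ h).Nonempty := (adm_iff Δ h).mp h1
  set U := Upsilon Δ h with hU
  have hseq : removalSeq Δ h = U :: removalTail Δ h U := by
    rw [removalSeq, dif_pos hc, hU, upsilon_eq Δ h hc]
  have hUa : U.a = Δ.a := (mem_firstCand.mp (upsilon_mem Δ h hc)).2.1
  have htail : ∀ s ∈ removalTail Δ h U, Δ.a < s.a := by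
    intro s hs
    rw [← hUa]; exact removalTail_gt Δ h U s hs
  have htr : ∀ x ∈ truncs Δ (removalSeq Δ h), Δ.a < x.a := by
    rw [hseq]
    exact truncs_gt Δ _ (by simpa using htail)
  have key : ∀ T : Seg, T.a = Δ.a → (T ∈ removal Δ h ↔ T ∈ h.erase U) := by
    intro T hTa
    rw [removal, Multiset.mem_add]
    have hTtr : T ∉ truncs Δ (removalSeq Δ h) := fun hmem => by
      have := htr T hmem; omega
    have hTtail : T ∉ removalTail Δ h U := fun hmem => by
      have := htail T hmem; omega
    have hcount : Multiset.count T ((removalSeq Δ h : Multiset Seg))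
        = if T = U then 1 else 0 := by
      rw [hseq]
      simp only [Multiset.coe_count]
      rw [List.count_cons]
      rw [List.count_eq_zero_of_not_mem hTtail]
      by_cases hTU : T = U
      · simp [hTU]
      · simp [hTU, Ne.symm hTU]
    have hcnt2 : Multiset.count T (h - (removalSeq Δ h : Multiset Seg))
        = Multiset.count T (h.erase U) := by
      rw [Multiset.count_sub, hcount]
      by_cases hTU : T = U
      · subst hTU; rw [Multiset.count_erase_self, if_pos rfl]
      · rw [Multiset.count_erase_of_ne hTU, if_neg hTU, Nat.sub_zero]
    constructor
    · rintro (hm | hm)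
      · rwa [← Multiset.count_pos, hcnt2, Multiset.count_pos] at hm
      · exact absurd hm hTtr
    · intro hm
      left
      rwa [← Multiset.count_pos, ← hcnt2, Multiset.count_pos] at hm
  ext T
  simp only [mem_firstCand]
  constructor
  · rintro ⟨hm, ha, hb⟩
    exact ⟨(key T (ha.trans hA)).mp hm, ha, hb⟩
  · rintro ⟨hm, ha, hb⟩
    exact ⟨(key T (ha.trans hA)).mpr hm, ha, hb⟩

lemma core (Δ Δ' : Seg) (h : Multiset Seg) (hA : Δ.a = Δ'.a) (hb : Δ.b ≤ Δ'.b)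
    (h1 : (firstCand Δ h).Nonempty)
    (h2 : (firstCand Δ' (h.erase (Upsilon Δ h))).Nonempty)
    (h3 : (firstCand Δ' h).Nonempty)
    (h4 : (firstCand Δ (h.erase (Upsilon Δ' h))).Nonempty) :
    ({Upsilon Δ h, Upsilon Δ' (h.erase (Upsilon Δ h))} : Multiset Seg)
      = {Upsilon Δ' h, Upsilon Δ (h.erase (Upsilon Δ' h))} := by
  set U := Upsilon Δ h with hUdef
  set V := Upsilon Δ' h with hVdef
  obtain ⟨hUh, hUa, hUb⟩ := mem_firstCand.mp (upsilon_mem Δ h h1)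
  obtain ⟨hVh, hVa, hVb⟩ := mem_firstCand.mp (upsilon_mem Δ' h h3)
  have hsub : firstCand Δ' h ⊆ firstCand Δ h := by
    intro T hT
    rw [mem_firstCand] at hT ⊢
    exact ⟨hT.1, hT.2.1.trans hA.symm, hb.trans hT.2.2⟩
  have hUV : U ≤ V := upsilon_le Δ h h1 (hsub (upsilon_mem Δ' h h3))
  by_cases hEq : U = V
  · -- need Upsilon Δ' (h.erase U) = Upsilon Δ (h.erase U)
    have hfc : firstCand Δ' (h.erase U) = firstCand Δ (h.erase U) := by
      ext T
      rw [mem_firstCand, mem_firstCand]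
      constructor
      · rintro ⟨hm, ha, hbb⟩
        exact ⟨hm, ha.trans (hA.symm), hb.trans hbb⟩
      · rintro ⟨hm, ha, hbb⟩
        refine ⟨hm, ha.trans hA, ?_⟩
        by_contra hlt
        push_neg at hlt
        have hTh : T ∈ h := Multiset.mem_of_mem_erase hm
        have hTc : T ∈ firstCand Δ h := mem_firstCand.mpr ⟨hTh, ha, hbb⟩
        have h5 : U ≤ T := upsilon_le Δ h h1 hTc
        rw [seg_le_iff] at h5
        have hVbb : Δ'.b ≤ U.b := hEq ▸ hVb
        have hTa : T.a = U.a := by rw [ha, hUa]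
        omega
    have h4' : (firstCand Δ (h.erase U)).Nonempty := by rw [hEq]; exact h4
    have heq2 : Upsilon Δ' (h.erase U) = Upsilon Δ (h.erase U) := by
      unfold Upsilon
      simp only [hfc]
      rw [dif_pos h4', dif_pos h4']
    rw [← hEq, heq2]
  · -- U < V case
    have hUb' : U.b < Δ'.b := by
      by_contra hge
      push_neg at hge
      have : U ∈ firstCand Δ' h := mem_firstCand.mpr ⟨hUh, hUa.trans hA, hge⟩
      exact hEq (le_antisymm hUV (upsilon_le Δ' h h3 this))
    -- Claim 1 : Upsilon Δ' (h.erase U) = V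
    have hfc1 : firstCand Δ' (h.erase U) = firstCand Δ' h := by
      ext T
      rw [mem_firstCand, mem_firstCand]
      constructor
      · rintro ⟨hm, ha, hbb⟩
        exact ⟨Multiset.mem_of_mem_erase hm, ha, hbb⟩
      · rintro ⟨hm, ha, hbb⟩
        have hTU : T ≠ U := fun hTeq => by rw [hTeq] at hbb; omega
        exact ⟨(Multiset.mem_erase_of_ne hTU).mpr hm, ha, hbb⟩
    have hc1 : Upsilon Δ' (h.erase U) = V := by
      rw [hVdef]
      exact upsilon_congr hfc1
    -- Claim 2 : Upsilon Δ (h.erase V) = U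
    have hUmem : U ∈ firstCand Δ (h.erase V) :=
      mem_firstCand.mpr ⟨(Multiset.mem_erase_of_ne hEq).mpr hUh, hUa, hUb⟩
    have hc2 : Upsilon Δ (h.erase V) = U := by
      rw [upsilon_eq Δ _ h4]
      refine le_antisymm (Finset.min'_le _ _ hUmem) ?_
      have hmem := Finset.min'_mem (firstCand Δ (h.erase V)) h4
      rw [mem_firstCand] at hmem
      refine upsilon_le Δ h h1 (mem_firstCand.mpr
        ⟨Multiset.mem_of_mem_erase hmem.1, hmem.2.1, hmem.2.2⟩)
    rw [hc1, hc2]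
    exact Multiset.pair_comm _ _

lemma exchange_erase (Δ Δ' : Seg) (h : Multiset Seg) (hA : Δ.a = Δ'.a)
    (h1 : (firstCand Δ h).Nonempty)
    (h2 : (firstCand Δ' (h.erase (Upsilon Δ h))).Nonempty)
    (h3 : (firstCand Δ' h).Nonempty)
    (h4 : (firstCand Δ (h.erase (Upsilon Δ' h))).Nonempty) :
    ({Upsilon Δ h, Upsilon Δ' (h.erase (Upsilon Δ h))} : Multiset Seg)
      = {Upsilon Δ' h, Upsilon Δ (h.erase (Upsilon Δ' h))} := by
  rcases le_total Δ.b Δ'.b with hbb | hbb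
  · exact core Δ Δ' h hA hbb h1 h2 h3 h4
  · exact (core Δ' Δ h hA.symm hbb h3 h4 h1 h2).symm

end Aux

/-- (First-segment exchange.)  For two segments `Δ, Δ'` with the same left
endpoint, both appropriately admissible, the multiset `{Υ(Δ, 𝔥), Υ(Δ', 𝔯(Δ, 𝔥))}`
equals `{Υ(Δ', 𝔥), Υ(Δ, 𝔯(Δ', 𝔥))}`. -/
theorem first_segment_exchange (Δ Δ' : Seg) (h : Multiset Seg) (hA : Δ.a = Δ'.a)
    (h1 : SegAdm Δ h) (h2 : SegAdm Δ' (removal Δ h))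
    (h3 : SegAdm Δ' h) (h4 : SegAdm Δ (removal Δ' h)) :
    ({Upsilon Δ h, Upsilon Δ' (removal Δ h)} : Multiset Seg)
      = {Upsilon Δ' h, Upsilon Δ (removal Δ' h)} := by
  have hb1 : firstCand Δ' (removal Δ h) = firstCand Δ' (h.erase (Upsilon Δ h)) :=
    bridge Δ Δ' h hA.symm h1
  have hb2 : firstCand Δ (removal Δ' h) = firstCand Δ (h.erase (Upsilon Δ' h)) :=
    bridge Δ' Δ h hA h3
  have e1 : Upsilon Δ' (removal Δ h) = Upsilon Δ' (h.erase (Upsilon Δ h)) :=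
    upsilon_congr hb1
  have e2 : Upsilon Δ (removal Δ' h) = Upsilon Δ (h.erase (Upsilon Δ' h)) :=
    upsilon_congr hb2
  rw [e1, e2]
  exact exchange_erase Δ Δ' h hA ((adm_iff Δ h).mp h1)
    (hb1 ▸ (adm_iff Δ' (removal Δ h)).mp h2) ((adm_iff Δ' h).mp h3)
    (hb2 ▸ (adm_iff Δ (removal Δ' h)).mp h4)
end

section
/- Let 𝔥 be a multisegment with all segments having left endpoint c (i.e., 𝔥 ∈ Mult^a_c), listed as Δ₁ ≥ Δ₂ ≥ ... ≥ Δ_k by length. Then for any sub-multiset selection in the order ≤^a_c: if 𝔫 = {Δ'₁ ≥ ... ≥ Δ'_m} ∈ Mult^a_c satisfies m ≤ k and Δ'_i ⊆ Δ_i for all i ≤ m (i.e., 𝔫 ≤^a_c 𝔥), then each Δ'_i is admissible to 𝔯(Δ'_{i−1}, ..., 𝔯(Δ'₁, 𝔥)...); that is, 𝔫 is admissible to 𝔥. -/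
set_option linter.unusedVariables false

lemma erase_dom (l : List Seg) (Y : Seg) (hY : Y ∈ l)
    (hs : l.Pairwise (fun S T => T.b ≤ S.b)) :
    (l.erase Y).Pairwise (fun S T => T.b ≤ S.b) ∧ (l.erase Y).length + 1 = l.length ∧
    ∀ j (hj : j < (l.erase Y).length) (hj' : j + 1 < l.length),
      (l[j+1]'hj').b ≤ ((l.erase Y)[j]'hj).b := by
  induction l with
  | nil => simp at hY
  | cons x t ih =>
    by_cases hx : x = Y
    · subst hx
      rw [List.erase_cons_head]
      exact ⟨(List.pairwise_cons.1 hs).2, rfl, fun j hj hj' => le_refl _⟩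
    · rw [List.erase_cons_tail (by simp [hx])]
      have hYt : Y ∈ t := by
        rcases List.mem_cons.1 hY with h | h
        · exact absurd h.symm hx
        · exact h
      obtain ⟨ihs, ihlen, ihget⟩ := ih hYt (List.pairwise_cons.1 hs).2
      refine ⟨?_, by simp [ihlen], ?_⟩
      · refine List.pairwise_cons.2 ⟨?_, ihs⟩
        intro T hT
        exact (List.pairwise_cons.1 hs).1 T (List.mem_of_mem_erase hT)
      · intro j hj hj'
        cases j with
        | zero =>
          simp only [List.getElem_cons_zero]
          have ht0 : 0 < t.length := List.length_pos_iff.2 (List.ne_nil_of_mem hYt)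
          have : (t[0]'ht0).b ≤ x.b := (List.pairwise_cons.1 hs).1 _ (t.getElem_mem ht0)
          simpa using this
        | succ k =>
          have h1 : k < (t.erase Y).length := by simpa using hj
          have h2 : k + 1 < t.length := by simpa using hj'
          have := ihget k h1 h2
          simpa using this

lemma mem_seg?_s11 {S : Seg} {x y : ℤ} (h : S ∈ seg? x y) : S.a = x ∧ S.b = y := by
  unfold seg? at h
  split at h
  · rw [Multiset.mem_singleton] at h; subst h; exact ⟨rfl, rfl⟩
  · simp at h

lemma truncs_a_pos (c : ℤ) (Δ : Seg) : ∀ (seq : List Seg),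
    (∀ T ∈ seq.drop 1, c < T.a) → c < Δ.b + 1 → ∀ S ∈ truncs Δ seq, c < S.a := by
  intro seq
  induction seq with
  | nil => intro _ _ S hS; simp [truncs] at hS
  | cons Δi rest ih =>
    cases rest with
    | nil =>
      intro _ hΔ S hS
      rw [show truncs Δ [Δi] = seg? (Δ.b + 1) Δi.b from rfl] at hS
      rw [(mem_seg?_s11 hS).1]; exact hΔ
    | cons Δj rest2 =>
      intro hdrop hΔ S hS
      rw [show truncs Δ (Δi :: Δj :: rest2) = seg? Δj.a Δi.b + truncs Δ (Δj :: rest2) from rfl,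
        Multiset.mem_add] at hS
      rcases hS with h1 | h2
      · rw [(mem_seg?_s11 h1).1]
        exact hdrop Δj (by simp)
      · refine ih (fun T hT => hdrop T ?_) hΔ S h2
        simp only [List.drop_one, List.tail_cons] at hT ⊢
        exact List.mem_cons_of_mem _ hT

lemma removalTail_a_gt (Δ : Seg) (h : Multiset Seg) :
    ∀ (n : ℕ) (prev : Seg), (prev.b - prev.a).toNat ≤ n →
      ∀ S ∈ removalTail Δ h prev, prev.a < S.a := by
  intro n
  induction n with
  | zero =>
    intro prev hn S hS
    rw [removalTail] at hS
    split at hS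
    · next hc =>
      have hmem : prev.a < ((nextCand Δ prev h).min' hc).a ∧
          ((nextCand Δ prev h).min' hc).b < prev.b ∧ Δ.b ≤ ((nextCand Δ prev h).min' hc).b :=
        (Finset.mem_filter.1 (Finset.min'_mem (nextCand Δ prev h) hc)).2
      have h4 : ((nextCand Δ prev h).min' hc).a ≤ ((nextCand Δ prev h).min' hc).b :=
        ((nextCand Δ prev h).min' hc).hle
      omega
    · simp at hS
  | succ m ih =>
    intro prev hn S hS
    rw [removalTail] at hS
    split at hS
    · next hc =>
      have hmem : prev.a < ((nextCand Δ prev h).min' hc).a ∧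
          ((nextCand Δ prev h).min' hc).b < prev.b ∧ Δ.b ≤ ((nextCand Δ prev h).min' hc).b :=
        (Finset.mem_filter.1 (Finset.min'_mem (nextCand Δ prev h) hc)).2
      have h4 : ((nextCand Δ prev h).min' hc).a ≤ ((nextCand Δ prev h).min' hc).b :=
        ((nextCand Δ prev h).min' hc).hle
      rcases List.mem_cons.1 hS with rfl | hS'
      · exact hmem.1
      · have := ih ((nextCand Δ prev h).min' hc) (by omega) S hS'
        omega
    · simp at hS

lemma firstCand_min'_spec (Δ : Seg) (h : Multiset Seg) (hfc : (firstCand Δ h).Nonempty) :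
    (firstCand Δ h).min' hfc ∈ h ∧ ((firstCand Δ h).min' hfc).a = Δ.a ∧
      Δ.b ≤ ((firstCand Δ h).min' hfc).b := by
  have hm := Finset.min'_mem (firstCand Δ h) hfc
  have h1 := (Finset.mem_filter.1 hm).1
  have h2 := (Finset.mem_filter.1 hm).2
  exact ⟨Multiset.mem_toFinset.1 h1, h2.1, h2.2⟩

lemma removal_atLeft (c : ℤ) (Δ : Seg) (h : Multiset Seg) (hΔa : Δ.a = c)
    (hfc : (firstCand Δ h).Nonempty) :
    atLeft (removal Δ h) c = (atLeft h c).erase ((firstCand Δ h).min' hfc) := by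
  obtain ⟨hYh, hYa, hYb⟩ := firstCand_min'_spec Δ h hfc
  set Y := (firstCand Δ h).min' hfc with hYdef
  have hYa' : Y.a = c := by rw [hYa, hΔa]
  have hseq : removalSeq Δ h = Y :: removalTail Δ h Y := by
    rw [removalSeq, dif_pos hfc]
  have htail : ∀ S ∈ removalTail Δ h Y, c < S.a := by
    intro S hS
    have := removalTail_a_gt Δ h (Y.b - Y.a).toNat Y le_rfl S hS
    omega
  have htr : Multiset.filter (fun S => S.a = c) (truncs Δ (removalSeq Δ h)) = 0 := by
    rw [Multiset.filter_eq_nil]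
    intro S hS
    have : c < S.a := by
      refine truncs_a_pos c Δ (removalSeq Δ h) ?_ (by have := Δ.hle; omega) S hS
      rw [hseq]
      simpa using htail
    omega
  have hseqL : Multiset.filter (fun S => S.a = c) ((removalSeq Δ h : List Seg) : Multiset Seg)
      = {Y} := by
    rw [hseq]
    rw [show ((Y :: removalTail Δ h Y : List Seg) : Multiset Seg)
        = Y ::ₘ (removalTail Δ h Y : Multiset Seg) from rfl]
    rw [Multiset.filter_cons, if_pos hYa']
    rw [Multiset.filter_eq_nil.2 (fun S hS => by
      have := htail S (by exact_mod_cast hS); omega)]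
    simp
  show Multiset.filter (fun S => S.a = c) (removal Δ h)
      = (Multiset.filter (fun S => S.a = c) h).erase Y
  rw [removal, Multiset.filter_add, Multiset.filter_sub, htr, hseqL,
    Multiset.sub_singleton]
  simp

lemma adm_aux (c : ℤ) : ∀ (N : List Seg), (∀ S ∈ N, S.a = c) →
    N.Pairwise (fun S T => T.b ≤ S.b) →
    ∀ (h : Multiset Seg) (l : List Seg), (l : Multiset Seg) = atLeft h c →
    l.Pairwise (fun S T => T.b ≤ S.b) → N.length ≤ l.length →
    (∀ i (h1 : i < N.length) (h2 : i < l.length), (N[i]'h1).b ≤ (l[i]'h2).b) →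
    listAdm N h := by
  intro N
  induction N with
  | nil => intro _ _ h l _ _ _ _; trivial
  | cons Δ N' ih =>
    intro hN hNs h l hl hls hlen hsub
    have hΔa : Δ.a = c := hN Δ (by simp)
    have hl0 : 0 < l.length := lt_of_lt_of_le (by simp) hlen
    have hΔ0l : l[0] ∈ l := l.getElem_mem hl0
    have hΔ0h : l[0] ∈ atLeft h c := by
      rw [← hl]; exact_mod_cast hΔ0l
    have hΔ0 : l[0] ∈ h ∧ l[0].a = c := Multiset.mem_filter.1 hΔ0h
    have hb0 : Δ.b ≤ l[0].b := hsub 0 (by simp) hl0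
    have hadm : SegAdm Δ h := ⟨l[0], hΔ0.1, by rw [hΔ0.2, hΔa], hb0⟩
    refine ⟨hadm, ?_⟩
    have hfc : (firstCand Δ h).Nonempty := by
      refine ⟨l[0], ?_⟩
      refine Finset.mem_filter.2 ⟨Multiset.mem_toFinset.2 hΔ0.1, ?_, hb0⟩
      rw [hΔ0.2, hΔa]
    obtain ⟨hYh, hYa, hYb⟩ := firstCand_min'_spec Δ h hfc
    set Y := (firstCand Δ h).min' hfc with hYdef
    have hYl : Y ∈ l := by
      have hY2 : Y ∈ atLeft h c := Multiset.mem_filter.2 ⟨hYh, by rw [hYa, hΔa]⟩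
      rw [← hl] at hY2
      exact_mod_cast hY2
    obtain ⟨hes, helen, heget⟩ := erase_dom l Y hYl hls
    have hkey : atLeft (removal Δ h) c = ((l.erase Y : List Seg) : Multiset Seg) := by
      rw [removal_atLeft c Δ h hΔa hfc, ← hYdef, ← hl, Multiset.coe_erase]
    refine ih (fun S hS => hN S (List.mem_cons_of_mem _ hS)) (List.pairwise_cons.1 hNs).2
      (removal Δ h) (l.erase Y) hkey.symm hes ?_ ?_
    · have : (Δ :: N').length ≤ l.length := hlen
      simp only [List.length_cons] at this
      omega
    intro i h1 h2
    have h2' : i + 1 < l.length := by omega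
    calc (N'[i]'h1).b ≤ (l[i+1]'h2').b := hsub (i+1) (by simpa using h1) h2'
      _ ≤ ((l.erase Y)[i]'h2).b := heget i h2 h2'

/-- Let `L` be a multisegment all of whose segments have left endpoint `c`,
listed in decreasing order of length, and let `N` be a multisegment at the point `c`,
also listed decreasingly, with `N.length ≤ L.length` and the `i`-th segment of `N`
contained in the `i`-th segment of `L` (i.e. `N ≤^a_c L`).  Then `N` is (sequentially)
admissible to `L`. -/
theorem smaller_multisegment_admissible (c : ℤ) (L N : List Seg)
    (hL : ∀ S ∈ L, S.a = c) (hN : ∀ S ∈ N, S.a = c)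
    (hLs : L.Pairwise (fun S T => T.b ≤ S.b)) (hNs : N.Pairwise (fun S T => T.b ≤ S.b))
    (hlen : N.length ≤ L.length)
    (hsub : ∀ i (hiN : i < N.length) (hiL : i < L.length),
      (N.get ⟨i, hiN⟩).b ≤ (L.get ⟨i, hiL⟩).b) :
    listAdm N (L : Multiset Seg) := by
  refine adm_aux c N hN hNs (L : Multiset Seg) L ?_ hLs hlen ?_
  · symm
    exact Multiset.filter_eq_self.2 (fun S hS => hL S (by exact_mod_cast hS))
  · intro i h1 h2
    exact hsub i h1 h2
end

section
/- (η change under removal of a containing segment.) Let Δ ⊆ Δ' be segments and 𝔥 a multisegment with Δ' admissible to 𝔥. (1) If a(Δ) > a(Δ'), then η_Δ(𝔯(Δ', 𝔥)) = η_Δ(𝔥). (2) If a(Δ) = a(Δ'), then η_Δ(𝔯(Δ', 𝔥)) is obtained from η_Δ(𝔥) by decreasing the first coordinate ε_Δ by exactly 1. -/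
set_option linter.unusedVariables false

section Helpers

lemma eps_add (x y : ℤ) (s t : Multiset Seg) :
    eps x y (s + t) = eps x y s + eps x y t := by
  simp [eps, Multiset.filter_add]

lemma eps_zero (x y : ℤ) : eps x y 0 = 0 := by simp [eps]

lemma eps_cons (x y : ℤ) (S : Seg) (m : Multiset Seg) :
    eps x y (S ::ₘ m) = (if S.a = x ∧ y ≤ S.b then 1 else 0) + eps x y m := by
  simp only [eps, Multiset.filter_cons]
  split <;> simp [Nat.add_comm]

lemma eps_seg? (x y u v : ℤ) :
    eps x y (seg? u v) = if u ≤ v ∧ u = x ∧ y ≤ v then 1 else 0 := by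
  unfold seg? eps
  split
  · next h =>
    rw [Multiset.filter_singleton]
    by_cases hc : u = x ∧ y ≤ v
    · rw [if_pos hc, if_pos ⟨h, hc⟩]; rfl
    · rw [if_neg hc, if_neg fun ⟨_, p, q⟩ => hc ⟨p, q⟩]; rfl
  · next h => rw [if_neg fun ⟨p, _, _⟩ => h p]; simp

lemma eps_mono (x y : ℤ) {s t : Multiset Seg} (h : t ≤ s) : eps x y t ≤ eps x y s :=
  Multiset.card_le_card (Multiset.filter_le_filter _ h)

lemma eps_sub (x y : ℤ) {s t : Multiset Seg} (h : t ≤ s) :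
    eps x y (s - t) = eps x y s - eps x y t := by
  unfold eps
  rw [Multiset.filter_sub, Multiset.card_sub (Multiset.filter_le_filter _ h)]

/-- elements of the removal tail: members of `h`, with `Δ'.b ≤ b < prev.b`, `a > prev.a`. -/
theorem tail_prop (Δ' : Seg) (h : Multiset Seg) (prev : Seg) :
    ∀ S ∈ removalTail Δ' h prev, S ∈ h ∧ Δ'.b ≤ S.b ∧ S.b < prev.b ∧ prev.a < S.a := by
  rw [removalTail]
  split
  · next hc =>
    intro S hS
    set m := (nextCand Δ' prev h).min' hc with hm
    have hmem := Finset.min'_mem (nextCand Δ' prev h) hc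
    rw [← hm] at hmem
    have h4 := m.hle
    simp only [nextCand, Finset.mem_filter, Multiset.mem_toFinset] at hmem
    obtain ⟨hmh, h1, h2, h3⟩ := hmem
    rcases List.mem_cons.mp hS with rfl | hS'
    · exact ⟨hmh, h3, h2, h1⟩
    · obtain ⟨g1, g2, g3, g4⟩ := tail_prop Δ' h m S hS'
      exact ⟨g1, g2, g3.trans h2, h1.trans g4⟩
  · intro S hS; simp at hS
termination_by (prev.b - prev.a).toNat
decreasing_by rw [← hm]; omega

theorem tail_pairwise (Δ' : Seg) (h : Multiset Seg) (prev : Seg) :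
    (removalTail Δ' h prev).Pairwise fun S T => T.b < S.b := by
  rw [removalTail]
  split
  · next hc =>
    set m := (nextCand Δ' prev h).min' hc with hm
    have hmem := Finset.min'_mem (nextCand Δ' prev h) hc
    rw [← hm] at hmem
    have h4 := m.hle
    simp only [nextCand, Finset.mem_filter, Multiset.mem_toFinset] at hmem
    obtain ⟨hmh, h1, h2, h3⟩ := hmem
    refine List.Pairwise.cons ?_ (tail_pairwise Δ' h m)
    intro T hT
    exact (tail_prop Δ' h _ T hT).2.2.1
  · exact List.Pairwise.nil
termination_by (prev.b - prev.a).toNat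
decreasing_by rw [← hm]; omega

/-- eps of the truncations along the tail equals eps of the tail itself. -/
theorem truncs_eps (Δ' : Seg) (h : Multiset Seg) (x y : ℤ)
    (hx : x ≤ Δ'.b) (hy : y ≤ Δ'.b) (prev : Seg) (hprev : Δ'.b ≤ prev.b) :
    eps x y (truncs Δ' (prev :: removalTail Δ' h prev)) =
      eps x y (↑(removalTail Δ' h prev)) := by
  rw [removalTail]
  split
  · next hc =>
    set m := (nextCand Δ' prev h).min' hc with hm
    have hmem := Finset.min'_mem (nextCand Δ' prev h) hc
    rw [← hm] at hmem
    have h4 := m.hle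
    simp only [nextCand, Finset.mem_filter, Multiset.mem_toFinset] at hmem
    obtain ⟨hmh, h1, h2, h3⟩ := hmem
    have htr : truncs Δ' (prev :: m :: removalTail Δ' h m) =
        seg? m.a prev.b + truncs Δ' (m :: removalTail Δ' h m) := rfl
    rw [htr, eps_add, eps_seg?, truncs_eps Δ' h x y hx hy m h3]
    have hcoe : ((m :: removalTail Δ' h m : List Seg) : Multiset Seg)
        = m ::ₘ ↑(removalTail Δ' h m) := rfl
    rw [hcoe, eps_cons]
    congr 1
    have : (m.a ≤ prev.b ∧ m.a = x ∧ y ≤ prev.b) ↔ (m.a = x ∧ y ≤ m.b) := by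
      constructor
      · rintro ⟨-, rfl, -⟩; exact ⟨rfl, by omega⟩
      · rintro ⟨rfl, h5⟩; exact ⟨by omega, rfl, by omega⟩
    simp [this]
  · next hc =>
    have htr : truncs Δ' [prev] = seg? (Δ'.b + 1) prev.b := rfl
    rw [htr, eps_seg?]
    have : ¬ (Δ'.b + 1 ≤ prev.b ∧ Δ'.b + 1 = x ∧ y ≤ prev.b) := by omega
    rw [if_neg this]; simp [eps_zero]
termination_by (prev.b - prev.a).toNat
decreasing_by rw [← hm]; omega

lemma list_le_of_nodup {l : List Seg} {h : Multiset Seg}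
    (hnd : l.Nodup) (hmem : ∀ S ∈ l, S ∈ h) : (l : Multiset Seg) ≤ h := by
  rw [Multiset.le_iff_count]
  intro a
  by_cases ha : a ∈ l
  · have h1 : l.count a ≤ 1 := List.nodup_iff_count_le_one.mp hnd a
    have h2 : 1 ≤ h.count a := Multiset.one_le_count_iff_mem.mpr (hmem a ha)
    simpa using h1.trans h2
  · simp [List.count_eq_zero_of_not_mem ha]

/-- The main computation: removal decreases `eps x y` by the indicator of `x = Δ'.a`. -/
theorem removal_eps (Δ' : Seg) (h : Multiset Seg) (hadm : SegAdm Δ' h)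
    (x y : ℤ) (hx : x ≤ Δ'.b) (hy : y ≤ Δ'.b) :
    eps x y (removal Δ' h) + (if Δ'.a = x then 1 else 0) = eps x y h := by
  obtain ⟨Δ₀, hΔ₀h, hΔ₀a, hΔ₀b⟩ := hadm
  have hne : (firstCand Δ' h).Nonempty := by
    refine ⟨Δ₀, ?_⟩
    simp only [firstCand, Finset.mem_filter, Multiset.mem_toFinset]
    exact ⟨hΔ₀h, hΔ₀a, hΔ₀b⟩
  set Δ₁ := (firstCand Δ' h).min' hne with hΔ₁
  have hmem₁ := Finset.min'_mem (firstCand Δ' h) hne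
  rw [← hΔ₁] at hmem₁
  simp only [firstCand, Finset.mem_filter, Multiset.mem_toFinset] at hmem₁
  obtain ⟨h1h, h1a, h1b⟩ := hmem₁
  have hseq : removalSeq Δ' h = Δ₁ :: removalTail Δ' h Δ₁ := by
    rw [removalSeq, dif_pos hne]
  -- removalSeq ≤ h
  have hnd : (removalSeq Δ' h).Nodup := by
    rw [hseq]
    have hpw : (Δ₁ :: removalTail Δ' h Δ₁).Pairwise fun S T => T.b < S.b :=
      List.Pairwise.cons (fun T hT => (tail_prop Δ' h Δ₁ T hT).2.2.1)
        (tail_pairwise Δ' h Δ₁)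
    exact hpw.imp fun {S T} hlt he => by rw [he] at hlt; omega
  have hmem : ∀ S ∈ removalSeq Δ' h, S ∈ h := by
    rw [hseq]
    rintro S hS
    rcases List.mem_cons.mp hS with rfl | hS'
    · exact h1h
    · exact (tail_prop Δ' h Δ₁ S hS').1
  have hle : ((removalSeq Δ' h : List Seg) : Multiset Seg) ≤ h :=
    list_le_of_nodup hnd hmem
  have hepsseq : eps x y (↑(removalSeq Δ' h)) =
      (if Δ'.a = x then 1 else 0) + eps x y (↑(removalTail Δ' h Δ₁)) := by
    rw [hseq]
    have hcoe : ((Δ₁ :: removalTail Δ' h Δ₁ : List Seg) : Multiset Seg)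
        = Δ₁ ::ₘ ↑(removalTail Δ' h Δ₁) := rfl
    rw [hcoe, eps_cons]
    congr 1
    have : (Δ₁.a = x ∧ y ≤ Δ₁.b) ↔ Δ'.a = x := by
      constructor
      · rintro ⟨h5, -⟩; omega
      · intro h5; exact ⟨by omega, by omega⟩
    simp [this]
  have htr : eps x y (truncs Δ' (removalSeq Δ' h)) = eps x y (↑(removalTail Δ' h Δ₁)) := by
    rw [hseq]; exact truncs_eps Δ' h x y hx hy Δ₁ h1b
  have hmono := eps_mono x y hle
  rw [removal, eps_add, eps_sub x y hle, htr]
  rw [hepsseq] at hmono ⊢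
  omega

end Helpers

/-- (η change under removal of a containing segment.)  Let `Δ ⊆ Δ'` and
`Δ'` admissible to `𝔥`.  (1) If `a(Δ) > a(Δ')` then `η_Δ(𝔯(Δ', 𝔥)) = η_Δ(𝔥)`.
(2) If `a(Δ) = a(Δ')` then `η_Δ(𝔯(Δ', 𝔥))` is obtained from `η_Δ(𝔥)` by decreasing the
first coordinate `ε_Δ` by exactly `1` (other coordinates unchanged). -/
theorem eta_change_containing (Δ Δ' : Seg) (h : Multiset Seg)
    (hsub : Δ.Sub Δ') (hadm : SegAdm Δ' h) :
    (Δ'.a < Δ.a →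
      ∀ x, Δ.a ≤ x → x ≤ Δ.b → eps x Δ.b (removal Δ' h) = eps x Δ.b h) ∧
    (Δ.a = Δ'.a →
      (eps Δ.a Δ.b (removal Δ' h) + 1 = eps Δ.a Δ.b h ∧
       ∀ x, Δ.a < x → x ≤ Δ.b → eps x Δ.b (removal Δ' h) = eps x Δ.b h)) := by
  obtain ⟨hsa, hsb⟩ := hsub
  have hΔ := Δ.hle
  have hΔ' := Δ'.hle
  constructor
  · intro hlt x hax hxb
    have := removal_eps Δ' h hadm x Δ.b (by omega) (by omega)
    have hne : Δ'.a ≠ x := by omega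
    simpa [hne] using this
  · intro heq
    constructor
    · have := removal_eps Δ' h hadm Δ.a Δ.b (by omega) (by omega)
      have hax : Δ'.a = Δ.a := heq.symm
      simpa [hax] using this
    · intro x hax hxb
      have := removal_eps Δ' h hadm x Δ.b (by omega) (by omega)
      have hne : Δ'.a ≠ x := by omega
      simpa [hne] using this
end
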